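/- arXiv:0710.2098 — 4 statements merged into one kernel-verified Lean document; each statement's English description precedes it below -/
import Mathlib

section
/- Uniqueness of homogeneous coordinates: Let V1 be a vector space of dimension at least 3 over a division ring K1 and V2 a vector space over a division ring K2. If φ : ℙ(V1) → ℙ(V2) is a bijection which preserves and reflects collinearity — for all nonzero x,y,z ∈ V1, x ∈ span_{K1}{y,z} if and only if a representative of φ([x]) lies in the span_{K2} of representatives of φ([y]) and φ([z]) — then there exist a ring isomorphism σ : K1 → K2 and a bijective σ-semilinear map f : V1 → V2 such that φ([v]) = [f(v)] for every nonzero v ∈ V1. -/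
/-!
Choose representatives `E x` of the points `φ [x]` and fix `a ≠ 0`. For `x ∉ K1 ∙ a` there is a
unique representative `X` of `φ [x]` such that `E a + X` represents `φ [a + x]`. For independent
`a, x, y`, the lines `⟨a + x, y⟩` and `⟨a + y, x⟩` meet in `[a + x + y]`, and `⟨x, y⟩`,
`⟨a, a + x + y⟩` meet in `[x + y]`; as `φ` preserves this configuration, the normalized
representatives are additive, and passing through a point off the plane `⟨a, x⟩` (dimension `≥ 3`)
removes the independence assumption. Extending across the line `K1 ∙ a` by additivity gives an
additive map `F` with `F x` on the line `φ [x]`. An additive map preserving and reflecting lines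
through the origin is semilinear: the factor by which `F (c • x)` rescales `F x` is the same for any
two independent vectors, and is a ring homomorphism `σ` of `c`. Surjectivity of `φ` makes `σ` and
`F` surjective.
-/

open Submodule
open scoped LinearAlgebra.Projectivization

section

variable {K V : Type*} [DivisionRing K] [AddCommGroup V] [Module K V]

theorem linearIndependent_pair_iff_notMem_span {u v : V} :
    LinearIndependent K ![u, v] ↔ u ≠ 0 ∧ v ∉ K ∙ u := by
  rw [show ![u, v] = Fin.snoc ![u] v by funext i; fin_cases i <;> rfl, linearIndependent_finSnoc]
  simp

theorem linearIndependent_triple_iff_notMem_span {u v w : V} :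
    LinearIndependent K ![u, v, w] ↔ u ≠ 0 ∧ v ∉ K ∙ u ∧ w ∉ span K {u, v} := by
  rw [show ![u, v, w] = Fin.snoc ![u, v] w by funext i; fin_cases i <;> rfl,
    linearIndependent_finSnoc, linearIndependent_pair_iff_notMem_span]
  simp [Matrix.range_cons, Set.pair_comm, and_assoc]

theorem LinearIndependent.eq_of_triple {u v w : V} (h : LinearIndependent K ![u, v, w])
    {p q r p' q' r' : K} (h' : p • u + q • v + r • w = p' • u + q' • v + r' • w) :
    p = p' ∧ q = q' ∧ r = r' := by
  have := Fintype.linearIndependent_iffₛ.1 h ![p, q, r] ![p', q', r']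
    (by simpa [Fin.sum_univ_three, add_assoc] using h')
  exact ⟨this 0, this 1, this 2⟩

theorem LinearIndependent.span_pair_add_inf_le {u v w : V} (h : LinearIndependent K ![u, v, w]) :
    span K {u + v, w} ⊓ span K {u + w, v} ≤ K ∙ (u + (v + w)) := by
  intro z hz
  obtain ⟨p, q, rfl⟩ := mem_span_pair.1 (mem_inf.1 hz).1
  obtain ⟨r, s, hrs⟩ := mem_span_pair.1 (mem_inf.1 hz).2
  obtain ⟨hrp, -, hrq⟩ : r = p ∧ s = p ∧ r = q := h.eq_of_triple (by
    simp only [smul_add] at hrs ⊢; rw [← hrs]; abel)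
  refine mem_span_singleton.2 ⟨p, ?_⟩
  rw [← hrq, hrp, smul_add, smul_add, smul_add, add_assoc]

theorem LinearIndependent.span_pair_inf_span_pair_add_le {u v w : V}
    (h : LinearIndependent K ![u, v, w]) :
    span K {v, w} ⊓ span K {u, u + (v + w)} ≤ K ∙ (v + w) := by
  intro z hz
  obtain ⟨p, q, rfl⟩ := mem_span_pair.1 (mem_inf.1 hz).1
  obtain ⟨r, s, hrs⟩ := mem_span_pair.1 (mem_inf.1 hz).2
  obtain ⟨-, hsp, hsq⟩ : r + s = 0 ∧ s = p ∧ s = q := h.eq_of_triple (by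
    simp only [smul_add, add_smul] at hrs ⊢; rw [zero_smul, zero_add, ← hrs]; abel)
  exact mem_span_singleton.2 ⟨s, by rw [smul_add, hsp, ← hsq, hsp]⟩

theorem LinearIndependent.congr_span_singleton {ι : Type*} {v w : ι → V}
    (hv : LinearIndependent K v) (h : ∀ i, K ∙ w i = K ∙ v i) : LinearIndependent K w := by
  choose c hc using fun i => span_singleton_eq_span_singleton.1 (h i).symm
  convert hv.units_smul c
  funext i
  exact (hc i).symm

theorem exists_notMem_span_of_mk_lt_rank {s : Set V} (hs : Cardinal.mk s < Module.rank K V) :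
    ∃ w, w ∉ span K s := by
  by_contra! h
  have htop : span K s = ⊤ := eq_top_iff.2 fun w _ => h w
  have := rank_span_le (R := K) s
  rw [htop, rank_top] at this
  exact hs.not_ge this

theorem exists_notMem_span_pair (hdim : 3 ≤ Module.rank K V) (u v : V) :
    ∃ w, w ∉ span K {u, v} := by
  refine exists_notMem_span_of_mk_lt_rank (lt_of_lt_of_le ?_ hdim)
  calc Cardinal.mk ({u, v} : Set V) ≤ 2 := by
        refine Cardinal.mk_insert_le.trans ?_; rw [Cardinal.mk_singleton]; norm_num
    _ < 3 := by norm_num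

theorem exists_notMem_span_singleton (hdim : 2 ≤ Module.rank K V) (u : V) :
    ∃ w, w ∉ K ∙ u :=
  exists_notMem_span_of_mk_lt_rank (lt_of_lt_of_le (by simp) hdim)

theorem notMem_span_singleton_of_notMem_span_pair {u v w : V} (h : w ∉ span K {u, v}) :
    w ∉ K ∙ u :=
  fun hw => h (span_mono (by simp) hw)

theorem add_notMem_span_singleton_of_notMem_span_pair {u v w : V} (h : w ∉ span K {u, v}) :
    v + w ∉ K ∙ u := fun hw => h (by
  simpa using sub_mem (span_mono (by simp) hw) (subset_span (by simp) : v ∈ span K {u, v}))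

theorem span_singleton_eq_of_mem {u v : V} (h : u ∈ K ∙ v) (hu : u ≠ 0) : K ∙ u = K ∙ v := by
  obtain ⟨c, rfl⟩ := mem_span_singleton.1 h
  exact span_singleton_smul_eq (Ne.isUnit (left_ne_zero_of_smul hu)) v

theorem span_pair_congr {u v u' v' : V} (hu : K ∙ u = K ∙ u') (hv : K ∙ v = K ∙ v') :
    span K {u, v} = span K {u', v'} := by
  rw [span_insert, span_insert, hu, hv]

theorem span_pair_inf_span_pair_le {u v w : V} (hw : w ∉ span K {u, v}) :
    span K {u, v} ⊓ span K {u, w} ≤ K ∙ u := by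
  intro z hz
  obtain ⟨huv, huw⟩ := mem_inf.1 hz
  obtain ⟨p, q, rfl⟩ := mem_span_pair.1 huw
  obtain rfl | hq := eq_or_ne q 0
  · simpa using smul_mem _ p (mem_span_singleton_self u)
  refine absurd ?_ hw
  have hu : p • u ∈ span K {u, v} := smul_mem _ p (subset_span (by simp))
  simpa [hq] using smul_mem _ q⁻¹ ((Submodule.add_mem_iff_right _ hu).1 huv)

end

section Semilinear

variable {K1 K2 V1 V2 : Type*} [DivisionRing K1] [DivisionRing K2]
    [AddCommGroup V1] [Module K1 V1] [AddCommGroup V2] [Module K2 V2]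

theorem AddMonoidHom.exists_map_smul_eq_smul (F : V1 →+ V2) (hdim : 2 ≤ Module.rank K1 V1)
    (hF : ∀ u v, u ∈ K1 ∙ v ↔ F u ∈ K2 ∙ F v) (c : K1) : ∃ d : K2, ∀ x, F (c • x) = d • F x := by
  choose d hd using fun x =>
    mem_span_singleton.1 ((hF (c • x) x).1 (smul_mem _ c (mem_span_singleton_self x)))
  have hF₀ (u : V1) : F u = 0 ↔ u = 0 := by simpa [eq_comm] using (hF u 0).symm
  have hd_eq {u v : V1} (h : LinearIndependent K1 ![u, v]) : d u = d v := by
    have hF' : LinearIndependent K2 ![F u, F v] := by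
      rw [linearIndependent_pair_iff_notMem_span] at h ⊢
      exact ⟨(hF₀ u).not.2 h.1, (hF v u).not.1 h.2⟩
    obtain ⟨h₁, h₂⟩ := hF'.eq_of_pair (s := d (u + v)) (t := d (u + v)) (s' := d u) (t' := d v)
      (by rw [← smul_add, ← map_add, hd, smul_add, map_add, ← hd u, ← hd v])
    exact h₁.symm.trans h₂
  obtain ⟨a, ha⟩ := (rank_pos_iff_exists_ne_zero (R := K1)).1 (lt_of_lt_of_le (by norm_num) hdim)
  refine ⟨d a, fun x => ?_⟩
  rcases eq_or_ne x 0 with rfl | hx0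
  · simp
  rw [← hd x]
  congr 1
  by_cases hx : x ∈ K1 ∙ a
  · obtain ⟨w, hw⟩ := exists_notMem_span_singleton hdim a
    have hwx : w ∉ K1 ∙ x := fun h => hw (by
      rwa [← span_singleton_le_iff_mem, ← span_singleton_eq_of_mem hx hx0,
        span_singleton_le_iff_mem])
    rw [hd_eq (linearIndependent_pair_iff_notMem_span.2 ⟨hx0, hwx⟩),
      hd_eq (linearIndependent_pair_iff_notMem_span.2 ⟨ha, hw⟩)]
  · exact (hd_eq (linearIndependent_pair_iff_notMem_span.2 ⟨ha, hx⟩)).symm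

theorem AddMonoidHom.exists_ringHom_map_smul (F : V1 →+ V2) (hdim : 2 ≤ Module.rank K1 V1)
    (hF : ∀ u v, u ∈ K1 ∙ v ↔ F u ∈ K2 ∙ F v) :
    ∃ σ : K1 →+* K2, ∀ c x, F (c • x) = σ c • F x := by
  choose σ hσ using F.exists_map_smul_eq_smul hdim hF
  obtain ⟨a, ha⟩ := (rank_pos_iff_exists_ne_zero (R := K1)).1 (lt_of_lt_of_le (by norm_num) hdim)
  have hFa : F a ≠ 0 := fun h0 => ha (by simpa using (hF a 0).2 (by simp [h0]))
  have cancel {s t : K2} (h : s • F a = t • F a) : s = t := smul_left_injective K2 hFa h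
  let σ' : K1 →+* K2 :=
    { toFun := σ
      map_one' := cancel (by rw [← hσ, one_smul, one_smul])
      map_mul' c d := cancel (by rw [← hσ, mul_smul, hσ, hσ, smul_smul])
      map_zero' := cancel (by rw [← hσ, zero_smul, zero_smul, map_zero])
      map_add' c d := cancel (by rw [← hσ, add_smul, map_add, hσ, hσ, add_smul]) }
  exact ⟨σ', hσ⟩

end Semilinear

/-- Representatives `E x` of the images of the points `[x]` under a bijection `ℙ(V1) → ℙ(V2)` that
preserves and reflects collinearity, with `E 0 = 0`. -/
structure ProjectiveLift (K1 K2 V1 V2 : Type*) [DivisionRing K1] [DivisionRing K2]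
    [AddCommGroup V1] [Module K1 V1] [AddCommGroup V2] [Module K2 V2] where
  toFun : V1 → V2
  map_zero' : toFun 0 = 0
  map_ne_zero' : ∀ x, x ≠ 0 → toFun x ≠ 0
  mem_span_pair_iff' : ∀ x y z, x ≠ 0 → y ≠ 0 → z ≠ 0 →
    (x ∈ span K1 {y, z} ↔ toFun x ∈ span K2 {toFun y, toFun z})
  exists_span_singleton_eq' : ∀ w, ∃ x, K2 ∙ toFun x = K2 ∙ w

namespace ProjectiveLift

variable {K1 K2 V1 V2 : Type*} [DivisionRing K1] [DivisionRing K2]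
    [AddCommGroup V1] [Module K1 V1] [AddCommGroup V2] [Module K2 V2]

instance : CoeFun (ProjectiveLift K1 K2 V1 V2) fun _ => V1 → V2 := ⟨toFun⟩

open Classical Projectivization in
noncomputable def ofEquiv (φ : ℙ K1 V1 ≃ ℙ K2 V2)
    (hφ : ∀ (x y z : V1) (hx : x ≠ 0) (hy : y ≠ 0) (hz : z ≠ 0),
      x ∈ span K1 {y, z} ↔
        (φ (Projectivization.mk K1 x hx)).rep ∈
          span K2 {(φ (Projectivization.mk K1 y hy)).rep, (φ (Projectivization.mk K1 z hz)).rep}) :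
    ProjectiveLift K1 K2 V1 V2 where
  toFun x := if hx : x = 0 then 0 else (φ (Projectivization.mk K1 x hx)).rep
  map_zero' := dif_pos rfl
  map_ne_zero' x hx := by simpa only [dif_neg hx] using rep_nonzero _
  mem_span_pair_iff' x y z hx hy hz := by
    simpa only [dif_neg hx, dif_neg hy, dif_neg hz] using hφ x y z hx hy hz
  exists_span_singleton_eq' w := by
    rcases eq_or_ne w 0 with rfl | hw
    · exact ⟨0, by simp⟩
    refine ⟨(φ.symm (Projectivization.mk K2 w hw)).rep, ?_⟩
    rw [dif_neg (rep_nonzero _), mk_rep, Equiv.apply_symm_apply, ← submodule_eq, submodule_mk]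

open Projectivization in
theorem ofEquiv_apply (φ : ℙ K1 V1 ≃ ℙ K2 V2) (hφ) {x : V1} (hx : x ≠ 0) :
    ofEquiv φ hφ x = (φ (Projectivization.mk K1 x hx)).rep :=
  dif_neg hx

variable (E : ProjectiveLift K1 K2 V1 V2) {x y z : V1}

theorem map_zero : E 0 = 0 := E.map_zero'

theorem map_eq_zero_iff : E x = 0 ↔ x = 0 :=
  ⟨not_imp_not.1 (E.map_ne_zero' x), fun h => h ▸ E.map_zero⟩

theorem mem_span_singleton_iff : x ∈ K1 ∙ y ↔ E x ∈ K2 ∙ E y := by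
  rcases eq_or_ne x 0 with rfl | hx
  · simp [E.map_zero]
  rcases eq_or_ne y 0 with rfl | hy
  · simp [E.map_zero, hx, E.map_eq_zero_iff]
  simpa using E.mem_span_pair_iff' x y y hx hy hy

theorem mem_span_pair_iff : x ∈ span K1 {y, z} ↔ E x ∈ span K2 {E y, E z} := by
  rcases eq_or_ne x 0 with rfl | hx
  · simp [E.map_zero]
  rcases eq_or_ne y 0 with rfl | hy
  · simpa [E.map_zero] using E.mem_span_singleton_iff
  rcases eq_or_ne z 0 with rfl | hz
  · rw [Set.pair_comm y 0, E.map_zero, Set.pair_comm (E y) 0]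
    simpa [E.map_zero] using E.mem_span_singleton_iff
  exact E.mem_span_pair_iff' x y z hx hy hz

theorem linearIndependent_pair_iff :
    LinearIndependent K2 ![E x, E y] ↔ LinearIndependent K1 ![x, y] := by
  simp only [linearIndependent_pair_iff_notMem_span, ne_eq, E.map_eq_zero_iff,
    E.mem_span_singleton_iff]

theorem linearIndependent_triple_iff :
    LinearIndependent K2 ![E x, E y, E z] ↔ LinearIndependent K1 ![x, y, z] := by
  simp only [linearIndependent_triple_iff_notMem_span, ne_eq, E.map_eq_zero_iff,
    E.mem_span_singleton_iff, E.mem_span_pair_iff]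

theorem mem_span_singleton_iff_of_span_singleton_eq {F : V1 → V2}
    (hF : ∀ x, K2 ∙ F x = K2 ∙ E x) : x ∈ K1 ∙ y ↔ F x ∈ K2 ∙ F y := by
  rw [E.mem_span_singleton_iff, ← span_singleton_le_iff_mem (R := K2),
    ← span_singleton_le_iff_mem (R := K2), hF, hF]

section NormalizedRep

variable {a x y : V1}

/-- Meaningful only for `x ∉ K1 ∙ a`, where it is unique (`eq_normalizedRep`). -/
noncomputable def normalizedRep (a x : V1) : V2 :=
  Classical.epsilon fun X => X ∈ K2 ∙ E x ∧ E a + X ∈ K2 ∙ E (a + x)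

theorem normalizedRep_spec (a x : V1) :
    E.normalizedRep a x ∈ K2 ∙ E x ∧ E a + E.normalizedRep a x ∈ K2 ∙ E (a + x) := by
  refine Classical.epsilon_spec (p := fun X => X ∈ K2 ∙ E x ∧ E a + X ∈ K2 ∙ E (a + x)) ?_
  have ha : a ∈ span K1 {a + x, x} := mem_span_pair.2 ⟨1, -1, by simp⟩
  obtain ⟨p, q, hpq⟩ := mem_span_pair.1 (E.mem_span_pair_iff.1 ha)
  refine ⟨-(q • E x), neg_mem (smul_mem _ _ (mem_span_singleton_self _)), ?_⟩
  exact mem_span_singleton.2 ⟨p, by rw [← hpq]; abel⟩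

theorem eq_normalizedRep (h : LinearIndependent K1 ![a, x]) {X : V2} (h₁ : X ∈ K2 ∙ E x)
    (h₂ : E a + X ∈ K2 ∙ E (a + x)) : X = E.normalizedRep a x := by
  obtain ⟨h₁', h₂'⟩ := E.normalizedRep_spec a x
  have hind : LinearIndependent K2 ![E x, E (a + x)] := E.linearIndependent_pair_iff.2 (by
    rw [add_comm, LinearIndependent.pair_add_right_iff, LinearIndependent.pair_symm_iff]
    exact h)
  obtain ⟨s, hs⟩ := mem_span_singleton.1 (sub_mem h₁ h₁')
  obtain ⟨t, ht⟩ := mem_span_singleton.1 (sub_mem h₂ h₂')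
  obtain ⟨rfl, -⟩ := hind.eq_zero_of_pair' (s := s) (t := t) (by rw [hs, ht]; abel)
  rwa [zero_smul, eq_comm, sub_eq_zero] at hs

theorem span_normalizedRep (h : LinearIndependent K1 ![a, x]) :
    K2 ∙ E.normalizedRep a x = K2 ∙ E x := by
  refine span_singleton_eq_of_mem (E.normalizedRep_spec a x).1 fun h0 => ?_
  have hind : LinearIndependent K2 ![E (a + x), E a] := E.linearIndependent_pair_iff.2 (by
    rw [LinearIndependent.pair_symm_iff, LinearIndependent.pair_add_right_iff]
    exact h)
  have := (E.normalizedRep_spec a x).2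
  rw [h0, add_zero] at this
  exact (linearIndependent_pair_iff_notMem_span.1 hind).2 this

theorem span_add_normalizedRep (h : LinearIndependent K1 ![a, x]) :
    K2 ∙ (E a + E.normalizedRep a x) = K2 ∙ E (a + x) := by
  refine span_singleton_eq_of_mem (E.normalizedRep_spec a x).2 fun h0 => ?_
  have hind : LinearIndependent K2 ![E x, E a] :=
    E.linearIndependent_pair_iff.2 (LinearIndependent.pair_symm_iff.1 h)
  refine (linearIndependent_pair_iff_notMem_span.1 hind).2 ?_
  rw [eq_neg_of_add_eq_zero_left h0]
  exact neg_mem (E.normalizedRep_spec a x).1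

theorem linearIndependent_normalizedRep (h : LinearIndependent K1 ![a, x, y]) :
    LinearIndependent K2 ![E a, E.normalizedRep a x, E.normalizedRep a y] := by
  obtain ⟨ha, hx, hy⟩ := linearIndependent_triple_iff_notMem_span.1 h
  refine (E.linearIndependent_triple_iff.2 h).congr_span_singleton fun i => ?_
  fin_cases i
  · rfl
  · exact E.span_normalizedRep (linearIndependent_pair_iff_notMem_span.2 ⟨ha, hx⟩)
  · exact E.span_normalizedRep (linearIndependent_pair_iff_notMem_span.2
      ⟨ha, notMem_span_singleton_of_notMem_span_pair hy⟩)

theorem normalizedRep_add_of_linearIndependent (h : LinearIndependent K1 ![a, x, y]) :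
    E.normalizedRep a (x + y) = E.normalizedRep a x + E.normalizedRep a y := by
  obtain ⟨ha, hx, hy⟩ := linearIndependent_triple_iff_notMem_span.1 h
  have hax : LinearIndependent K1 ![a, x] := linearIndependent_pair_iff_notMem_span.2 ⟨ha, hx⟩
  have hay : LinearIndependent K1 ![a, y] := linearIndependent_pair_iff_notMem_span.2
    ⟨ha, notMem_span_singleton_of_notMem_span_pair hy⟩
  have haxy : LinearIndependent K1 ![a, x + y] := linearIndependent_pair_iff_notMem_span.2
    ⟨ha, add_notMem_span_singleton_of_notMem_span_pair hy⟩
  have hind := E.linearIndependent_normalizedRep h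
  set X := E.normalizedRep a x
  set Y := E.normalizedRep a y
  have hA : K2 ∙ (E a + (X + Y)) = K2 ∙ E (a + (x + y)) := by
    refine (span_singleton_eq_of_mem (hind.span_pair_add_inf_le (mem_inf.2 ⟨?_, ?_⟩)) ?_).symm
    · rw [span_pair_congr (E.span_add_normalizedRep hax) (E.span_normalizedRep hay)]
      exact E.mem_span_pair_iff.1 (mem_span_pair.2 ⟨1, 1, by simp [add_assoc]⟩)
    · rw [span_pair_congr (E.span_add_normalizedRep hay) (E.span_normalizedRep hax)]
      exact E.mem_span_pair_iff.1 (mem_span_pair.2 ⟨1, 1, by simp; abel⟩)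
    · simpa using (E.linearIndependent_pair_iff.2
        (LinearIndependent.pair_add_right_iff.2 haxy)).ne_zero 1
  have hXY : K2 ∙ (X + Y) = K2 ∙ E (x + y) := by
    refine (span_singleton_eq_of_mem
      (hind.span_pair_inf_span_pair_add_le (mem_inf.2 ⟨?_, ?_⟩)) ?_).symm
    · rw [span_pair_congr (E.span_normalizedRep hax) (E.span_normalizedRep hay)]
      exact E.mem_span_pair_iff.1 (mem_span_pair.2 ⟨1, 1, by simp⟩)
    · rw [span_pair_congr rfl hA]
      exact E.mem_span_pair_iff.1 (mem_span_pair.2 ⟨-1, 1, by simp⟩)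
    · simpa using (E.linearIndependent_pair_iff.2 haxy).ne_zero 1
  exact (E.eq_normalizedRep haxy (hXY ▸ mem_span_singleton_self _)
    (hA ▸ mem_span_singleton_self _)).symm

theorem normalizedRep_add (hdim : 3 ≤ Module.rank K1 V1) (ha : a ≠ 0) (hx : x ∉ K1 ∙ a)
    (hy : y ∉ K1 ∙ a) (hxy : x + y ∉ K1 ∙ a) :
    E.normalizedRep a (x + y) = E.normalizedRep a x + E.normalizedRep a y := by
  have key {u v : V1} (hu : u ∉ K1 ∙ a) (hv : v ∉ span K1 {a, u}) :=
    E.normalizedRep_add_of_linearIndependent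
      (linearIndependent_triple_iff_notMem_span.2 ⟨ha, hu, hv⟩)
  by_cases hyx : y ∉ span K1 {a, x}
  · exact key hx hyx
  rw [not_not] at hyx
  obtain ⟨z, hz⟩ := exists_notMem_span_pair hdim a x
  have hz' {v : V1} (hv : v ∈ span K1 {a, x}) : z ∉ span K1 {a, v} := fun hzv =>
    hz (span_le.2 (Set.insert_subset_iff.2 ⟨subset_span (by simp),
      Set.singleton_subset_iff.2 hv⟩) hzv)
  have h₁ := key hxy (hz' (add_mem (subset_span (by simp)) hyx))
  rw [add_assoc, key hx fun h => hz ((Submodule.add_mem_iff_right _ hyx).1 h),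
    key hy (hz' hyx), ← add_assoc] at h₁
  exact (add_right_cancel h₁).symm

end NormalizedRep

section ExtendedRep

variable {a b c x y : V1}

/-- On `K1 ∙ a`, where `normalizedRep a` is meaningless, the value is the one forced by additivity;
it does not depend on the auxiliary `b ∉ K1 ∙ a` (`extendedRep_eq_sub`). -/
noncomputable def extendedRep (a b x : V1) : V2 :=
  open Classical in
  if x ∈ K1 ∙ a then E.normalizedRep a (x + b) - E.normalizedRep a b else E.normalizedRep a x

theorem extendedRep_of_notMem (hx : x ∉ K1 ∙ a) : E.extendedRep a b x = E.normalizedRep a x :=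
  if_neg hx

theorem extendedRep_ne_zero_of_mem (ha : a ≠ 0) (hb : b ∉ K1 ∙ a) (hx : x ∈ K1 ∙ a) (hx0 : x ≠ 0) :
    E.extendedRep a b x ≠ 0 := by
  have hab : LinearIndependent K1 ![a, b] := linearIndependent_pair_iff_notMem_span.2 ⟨ha, hb⟩
  have haxb : LinearIndependent K1 ![a, x + b] := linearIndependent_pair_iff_notMem_span.2
    ⟨ha, (Submodule.add_mem_iff_right _ hx).not.2 hb⟩
  rw [extendedRep, if_pos hx, sub_ne_zero]
  intro heq
  have hxb : E (x + b) ∈ K2 ∙ E b := by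
    rw [← E.span_normalizedRep hab, ← heq, E.span_normalizedRep haxb]
    exact mem_span_singleton_self _
  have hxb' : x ∈ K1 ∙ b :=
    (Submodule.add_mem_iff_left _ (mem_span_singleton_self b)).1 (E.mem_span_singleton_iff.2 hxb)
  refine (linearIndependent_pair_iff_notMem_span.1 (LinearIndependent.pair_symm_iff.1 hab)).2 ?_
  rw [← span_singleton_le_iff_mem, ← span_singleton_eq_of_mem hx hx0, span_singleton_le_iff_mem]
  exact hxb'

variable (hdim : 3 ≤ Module.rank K1 V1) (ha : a ≠ 0)
include hdim ha

theorem normalizedRep_add_sub_eq_of_add_notMem (hx : x ∈ K1 ∙ a) (hb : b ∉ K1 ∙ a)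
    (hc : c ∉ K1 ∙ a) (hbc : b + c ∉ K1 ∙ a) :
    E.normalizedRep a (x + b) - E.normalizedRep a b =
      E.normalizedRep a (x + c) - E.normalizedRep a c := by
  have hxb : x + b ∉ K1 ∙ a := (Submodule.add_mem_iff_right _ hx).not.2 hb
  have hxc : x + c ∉ K1 ∙ a := (Submodule.add_mem_iff_right _ hx).not.2 hc
  have hxbc : x + b + c ∉ K1 ∙ a := by rwa [add_assoc, Submodule.add_mem_iff_right _ hx]
  rw [sub_eq_sub_iff_add_eq_add, ← E.normalizedRep_add hdim ha hxb hc hxbc,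
    ← E.normalizedRep_add hdim ha hxc hb (by rwa [add_right_comm]), add_right_comm]

theorem normalizedRep_add_sub_eq (hx : x ∈ K1 ∙ a) (hb : b ∉ K1 ∙ a) (hc : c ∉ K1 ∙ a) :
    E.normalizedRep a (x + b) - E.normalizedRep a b =
      E.normalizedRep a (x + c) - E.normalizedRep a c := by
  by_cases hbc : b + c ∉ K1 ∙ a
  · exact E.normalizedRep_add_sub_eq_of_add_notMem hdim ha hx hb hc hbc
  rw [not_not] at hbc
  obtain ⟨z, hz⟩ := exists_notMem_span_pair hdim a b
  have hza : z ∉ K1 ∙ a := notMem_span_singleton_of_notMem_span_pair hz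
  have hbz : b + z ∉ K1 ∙ a := add_notMem_span_singleton_of_notMem_span_pair hz
  have hcz : c + z ∉ K1 ∙ a := fun h => hz (by
    convert add_mem (span_mono (by simp) (sub_mem h hbc))
      (subset_span (by simp) : b ∈ span K1 {a, b}) using 1
    abel)
  rw [E.normalizedRep_add_sub_eq_of_add_notMem hdim ha hx hb hza hbz,
    E.normalizedRep_add_sub_eq_of_add_notMem hdim ha hx hc hza hcz]

variable (hb : b ∉ K1 ∙ a)
include hb

theorem extendedRep_eq_sub (hc : c ∉ K1 ∙ a) (hxc : x + c ∉ K1 ∙ a) :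
    E.extendedRep a b x = E.normalizedRep a (x + c) - E.normalizedRep a c := by
  by_cases hx : x ∈ K1 ∙ a
  · rw [extendedRep, if_pos hx]
    exact E.normalizedRep_add_sub_eq hdim ha hx hb hc
  · rw [E.extendedRep_of_notMem hx, E.normalizedRep_add hdim ha hx hc hxc, add_sub_cancel_right]

theorem extendedRep_add_of_notMem (hc : c ∉ K1 ∙ a) (hxc : x + c ∉ K1 ∙ a) :
    E.extendedRep a b (x + c) = E.extendedRep a b x + E.extendedRep a b c := by
  rw [E.extendedRep_of_notMem hxc, E.extendedRep_of_notMem hc,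
    E.extendedRep_eq_sub hdim ha hb hc hxc, sub_add_cancel]

theorem extendedRep_add (x y : V1) :
    E.extendedRep a b (x + y) = E.extendedRep a b x + E.extendedRep a b y := by
  by_cases hxy : x + y ∈ K1 ∙ a
  · obtain ⟨c, hc⟩ := exists_notMem_span_pair hdim a y
    have hca : c ∉ K1 ∙ a := notMem_span_singleton_of_notMem_span_pair hc
    have hyc : y + c ∉ K1 ∙ a := add_notMem_span_singleton_of_notMem_span_pair hc
    have hxyc : x + y + c ∉ K1 ∙ a := by rwa [Submodule.add_mem_iff_right _ hxy]
    have h := E.extendedRep_add_of_notMem hdim ha hb hyc (by rwa [← add_assoc])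
    rw [← add_assoc, E.extendedRep_add_of_notMem hdim ha hb hca hxyc,
      E.extendedRep_add_of_notMem hdim ha hb hca hyc, ← add_assoc] at h
    exact add_right_cancel h
  by_cases hy : y ∈ K1 ∙ a
  · have hx : x ∉ K1 ∙ a := fun hx => hxy (add_mem hx hy)
    rw [add_comm, E.extendedRep_add_of_notMem hdim ha hb hx (by rwa [add_comm]), add_comm]
  · exact E.extendedRep_add_of_notMem hdim ha hb hy hxy

theorem extendedRep_mem_span_pair (hx : x ∈ K1 ∙ a) (hc : c ∉ K1 ∙ a) :
    E.extendedRep a b x ∈ span K2 {E a, E c} := by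
  rw [E.extendedRep_eq_sub hdim ha hb hc ((Submodule.add_mem_iff_right _ hx).not.2 hc)]
  refine sub_mem ((span_singleton_le_iff_mem _ _).2 ?_ (E.normalizedRep_spec a _).1)
    ((span_singleton_le_iff_mem _ _).2 (subset_span (by simp)) (E.normalizedRep_spec a c).1)
  exact E.mem_span_pair_iff.1 (add_mem (span_mono (by simp) hx) (subset_span (by simp)))

theorem span_extendedRep (x : V1) : K2 ∙ E.extendedRep a b x = K2 ∙ E x := by
  by_cases hx : x ∈ K1 ∙ a
  swap
  · rw [E.extendedRep_of_notMem hx]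
    exact E.span_normalizedRep (linearIndependent_pair_iff_notMem_span.2 ⟨ha, hx⟩)
  rcases eq_or_ne x 0 with rfl | hx0
  · have h0 := E.extendedRep_add hdim ha hb 0 0
    rw [add_zero, left_eq_add] at h0
    rw [h0, E.map_zero]
  obtain ⟨z, hz⟩ := exists_notMem_span_pair hdim a b
  rw [span_singleton_eq_of_mem (E.mem_span_singleton_iff.1 hx) (E.map_ne_zero' x hx0)]
  exact span_singleton_eq_of_mem (span_pair_inf_span_pair_le (E.mem_span_pair_iff.not.1 hz)
    (mem_inf.2 ⟨E.extendedRep_mem_span_pair hdim ha hb hx hb,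
      E.extendedRep_mem_span_pair hdim ha hb hx (notMem_span_singleton_of_notMem_span_pair hz)⟩))
    (E.extendedRep_ne_zero_of_mem ha hb hx hx0)

end ExtendedRep

theorem injective_of_span_singleton_eq {σ : K1 →+* K2} (f : V1 →ₛₗ[σ] V2)
    (hf : ∀ x, K2 ∙ f x = K2 ∙ E x) : Function.Injective f := by
  refine (injective_iff_map_eq_zero f).2 fun x hx => E.map_eq_zero_iff.1 ?_
  rw [← span_singleton_eq_bot (R := K2), ← hf, hx, span_zero_singleton]

theorem surjective_of_span_singleton_eq {σ : K1 →+* K2} (hσ : Function.Surjective σ)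
    (f : V1 →ₛₗ[σ] V2) (hf : ∀ x, K2 ∙ f x = K2 ∙ E x) : Function.Surjective f := by
  intro w
  obtain ⟨x, hx⟩ := E.exists_span_singleton_eq' w
  obtain ⟨e, he⟩ := mem_span_singleton.1 (show w ∈ K2 ∙ f x by
    rw [hf]; exact hx ▸ mem_span_singleton_self w)
  obtain ⟨μ, rfl⟩ := hσ e
  exact ⟨μ • x, by rw [map_smulₛₗ, he]⟩

theorem surjective_ringHom_of_span_singleton_eq (hdim : 2 ≤ Module.rank K1 V1) {σ : K1 →+* K2}
    (f : V1 →ₛₗ[σ] V2) (hf : ∀ x, K2 ∙ f x = K2 ∙ E x) : Function.Surjective σ := by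
  obtain ⟨a, ha⟩ := (rank_pos_iff_exists_ne_zero (R := K1)).1 (lt_of_lt_of_le (by norm_num) hdim)
  obtain ⟨b, hb⟩ := exists_notMem_span_singleton hdim a
  have hab : LinearIndependent K2 ![f a, f b] :=
    (E.linearIndependent_pair_iff.2 (linearIndependent_pair_iff_notMem_span.2 ⟨ha, hb⟩)
      ).congr_span_singleton fun i => by fin_cases i <;> exact hf _
  intro t
  obtain ⟨x, hx⟩ := E.exists_span_singleton_eq' (f a + t • f b)
  have hw : f a + t • f b ≠ 0 := fun h0 =>
    one_ne_zero (hab.eq_zero_of_pair (s := 1) (t := t) (by rwa [one_smul])).1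
  have hx_mem : x ∈ span K1 {a, b} := by
    rw [E.mem_span_pair_iff, ← span_singleton_le_iff_mem, hx, span_singleton_le_iff_mem,
      span_pair_congr (hf a).symm (hf b).symm]
    exact add_mem (subset_span (by simp)) (smul_mem _ t (subset_span (by simp)))
  obtain ⟨α, β, rfl⟩ := mem_span_pair.1 hx_mem
  obtain ⟨e, he⟩ := mem_span_singleton.1 (show f (α • a + β • b) ∈ K2 ∙ (f a + t • f b) by
    rw [← hx, ← hf]; exact mem_span_singleton_self _)
  have he0 : e ≠ 0 := by
    rintro rfl
    rw [zero_smul, eq_comm, ← span_singleton_eq_bot (R := K2), hf, hx, span_singleton_eq_bot] at he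
    exact hw he
  rw [map_add, map_smulₛₗ, map_smulₛₗ, smul_add, smul_smul] at he
  obtain ⟨h₁, h₂⟩ := hab.eq_of_pair he
  refine ⟨α⁻¹ * β, ?_⟩
  rw [map_mul, map_inv₀, ← h₁, ← h₂, ← mul_assoc, inv_mul_cancel₀ he0, one_mul]

theorem exists_semilinear_bijective (hdim : 3 ≤ Module.rank K1 V1) :
    ∃ (σ : K1 ≃+* K2) (f : V1 →ₛₗ[σ.toRingHom] V2),
      Function.Bijective f ∧ ∀ x, K2 ∙ f x = K2 ∙ E x := by
  have hdim₂ : 2 ≤ Module.rank K1 V1 := le_trans (by norm_num) hdim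
  obtain ⟨a, ha⟩ := (rank_pos_iff_exists_ne_zero (R := K1)).1 (lt_of_lt_of_le (by norm_num) hdim)
  obtain ⟨b, hb⟩ := exists_notMem_span_singleton hdim₂ a
  let F : V1 →+ V2 := AddMonoidHom.mk' (E.extendedRep a b) (E.extendedRep_add hdim ha hb)
  have hF : ∀ x, K2 ∙ F x = K2 ∙ E x := E.span_extendedRep hdim ha hb
  obtain ⟨σ, hσ⟩ := F.exists_ringHom_map_smul hdim₂ fun u v =>
    E.mem_span_singleton_iff_of_span_singleton_eq hF
  have hσ_surj := E.surjective_ringHom_of_span_singleton_eq hdim₂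
    { F with map_smul' := hσ } hF
  let σ' : K1 ≃+* K2 := RingEquiv.ofBijective σ ⟨σ.injective, hσ_surj⟩
  let f : V1 →ₛₗ[σ'.toRingHom] V2 := { F with map_smul' := hσ }
  exact ⟨σ', f, ⟨E.injective_of_span_singleton_eq f hF,
    E.surjective_of_span_singleton_eq σ'.surjective f hF⟩, hF⟩

end ProjectiveLift

/-- **Uniqueness of homogeneous coordinates.** A collinearity-preserving and -reflecting
bijection `φ : ℙ(V1) → ℙ(V2)`, where `dim V1 ≥ 3`, is induced by a bijective semilinear
map `f : V1 → V2` over a ring isomorphism `σ : K1 → K2`. -/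
theorem uniqueness_homogeneous_coordinates {K1 K2 V1 V2 : Type*}
    [DivisionRing K1] [DivisionRing K2]
    [AddCommGroup V1] [Module K1 V1] [AddCommGroup V2] [Module K2 V2]
    (hdim : 3 ≤ Module.rank K1 V1)
    (φ : Projectivization K1 V1 ≃ Projectivization K2 V2)
    (hφ : ∀ (x y z : V1) (hx : x ≠ 0) (hy : y ≠ 0) (hz : z ≠ 0),
      x ∈ Submodule.span K1 {y, z} ↔
        (φ (Projectivization.mk K1 x hx)).rep ∈
          Submodule.span K2 {(φ (Projectivization.mk K1 y hy)).rep,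
            (φ (Projectivization.mk K1 z hz)).rep}) :
    ∃ (σ : K1 ≃+* K2) (f : V1 →ₛₗ[σ.toRingHom] V2),
      Function.Bijective f ∧
      ∀ (v : V1) (hv : v ≠ 0), ∃ hfv : f v ≠ 0,
        φ (Projectivization.mk K1 v hv) = Projectivization.mk K2 (f v) hfv := by
  obtain ⟨σ, f, hf, hspan⟩ := (ProjectiveLift.ofEquiv φ hφ).exists_semilinear_bijective hdim
  refine ⟨σ, f, hf, fun v hv =>
    ⟨(map_ne_zero_iff f hf.1).2 hv, Projectivization.submodule_injective ?_⟩⟩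
  rw [Projectivization.submodule_mk, hspan, ProjectiveLift.ofEquiv_apply φ hφ hv,
    Projectivization.submodule_eq]
end

section
/- Let (G, l, ⊥) be a Hilbert geometry. If S ⊆ G is a closed subspace (S^{⊥⊥} = S) and a ∈ G, then the subspace cl({a} ∪ S) is closed: (cl({a} ∪ S))^{⊥⊥} = cl({a} ∪ S). -/
/-!
By (O5) every point lies in the join of `S` and `S^⊥`, i.e. in `S`, in `S^⊥`, or on a line
through a point `e ∈ S` and a point `p ⊥ S`. Exchanging `a` for `p` on that line, it suffices to
treat `T = cl({p} ∪ S)` with `p ⊥ S`. The only point of `T^⊥⊥ ∩ S^⊥` is then `p`: for another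
one `q`, (O4) gives `z` on the line `pq` with `z ⊥ p`; then `z ⊥ S` as well, so `z` lies in both
`T^⊥` and `T^⊥⊥`, against (O1). Finally a point `x ∈ T^⊥⊥` on the line through `e ∈ S` and
`q ⊥ S` forces `q ∈ T^⊥⊥ ∩ S^⊥`, so `q = p` and `x ∈ T`.
-/

universe u

structure ProjGeom (G : Type*) where
  l : G → G → G → Prop
  g1 : ∀ a b, l a b a
  g2 : ∀ a b p q, l a p q → l b p q → p ≠ q → l a b p
  g3 : ∀ a b c d p, l p a b → l p c d → ∃ q, l q a c ∧ l q b d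

namespace ProjGeom

variable {G : Type*} (PG : ProjGeom G)

open scoped Classical in
/-- The projective line through `a` and `b`, with the convention `a ⋆ a = {a}`. -/
noncomputable def star (a b : G) : Set G :=
  if a = b then {a} else {x | PG.l x a b}

/-- A subspace of a projective geometry. -/
def IsSubspace (S : Set G) : Prop :=
  ∀ a ∈ S, ∀ b ∈ S, PG.star a b ⊆ S

/-- The projective closure of a subset. -/
def cl (A : Set G) : Set G :=
  ⋂₀ {S : Set G | PG.IsSubspace S ∧ A ⊆ S}

end ProjGeom


/-- A Hilbert geometry: a projective geometry with an orthogonality relation satisfying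
(O1)-(O5). -/
structure HilbGeom (G : Type u) extends ProjGeom G where
  perp : G → G → Prop
  o1 : ∀ a b : G, perp a b → a ≠ b
  o2 : ∀ a b : G, perp a b → perp b a
  o3 : ∀ a b c p : G, a ≠ b → perp a p → perp b p → l c a b → perp c p
  o4 : ∀ a b : G, a ≠ b → ∃ q : G, l q a b ∧ perp q a
  o5 : ∀ S : Set G, toProjGeom.IsSubspace S →
    {x : G | ∀ y ∈ {z : G | ∀ w ∈ S, perp z w}, perp x y} = S →
    toProjGeom.cl (S ∪ {z : G | ∀ w ∈ S, perp z w}) = Set.univ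

/-- The orthogonal of a set of points of a Hilbert geometry. -/
def HilbGeom.perpSet {G : Type u} (HG : HilbGeom G) (A : Set G) : Set G :=
  {x : G | ∀ a ∈ A, HG.perp x a}

namespace ProjGeom

variable {G : Type*} {PG : ProjGeom G}

lemma l_rot {a b c : G} (h : PG.l a b c) : PG.l c a b := by
  by_cases hbc : b = c
  · subst hbc; exact PG.g1 b a
  · exact PG.g2 c a b c (PG.g1 c b) h hbc

lemma l_swap {a b c : G} (h : PG.l a b c) : PG.l a c b := by
  by_cases hbc : b = c
  · subst hbc; exact h
  · exact PG.g2 a c b c h (PG.g1 c b) hbc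

lemma l_trans {a b p q c : G} (hab : a ≠ b) (hp : PG.l p a b) (hq : PG.l q a b)
    (hc : PG.l c a b) : PG.l c p q := by
  by_cases hpa : p = a
  · subst hpa
    exact l_swap (PG.g2 c q p b hc hq hab)
  · exact l_swap (PG.g2 c q p a (PG.g2 c p a b hc hp hab) (PG.g2 q p a b hq hp hab) hpa)

variable (PG) in
lemma star_self (a : G) : PG.star a a = {a} := if_pos rfl

lemma mem_star_iff {a b x : G} (hab : a ≠ b) : x ∈ PG.star a b ↔ PG.l x a b := by
  simp only [star, if_neg hab, Set.mem_ofPred_eq]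

lemma left_mem_star (a b : G) : a ∈ PG.star a b := by
  obtain rfl | hab := eq_or_ne a b
  · exact (star_self PG a).symm ▸ rfl
  · exact (mem_star_iff hab).2 (l_swap (PG.g1 a b))

lemma right_mem_star (a b : G) : b ∈ PG.star a b := by
  obtain rfl | hab := eq_or_ne a b
  · exact (star_self PG a).symm ▸ rfl
  · exact (mem_star_iff hab).2 (PG.g1 b a)

lemma star_eq {a b p q : G} (hab : a ≠ b) (hpq : p ≠ q)
    (hp : PG.l p a b) (hq : PG.l q a b) : PG.star a b = PG.star p q := by
  have hapq : PG.l a p q := l_rot (PG.g2 p q a b hp hq hab)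
  have hbpq : PG.l b p q := l_rot (PG.g2 p q b a (l_swap hp) (l_swap hq) hab.symm)
  ext x
  rw [mem_star_iff hab, mem_star_iff hpq]
  exact ⟨l_trans hab hp hq, l_trans hpq hapq hbpq⟩

lemma isSubspace_iff {S : Set G} :
    PG.IsSubspace S ↔ ∀ a ∈ S, ∀ b ∈ S, a ≠ b → ∀ z, PG.l z a b → z ∈ S := by
  refine ⟨fun hS a ha b hb hab z hz => hS a ha b hb ((mem_star_iff hab).2 hz),
    fun h a ha b hb z hz => ?_⟩
  obtain rfl | hab := eq_or_ne a b
  · rw [star_self, Set.mem_singleton_iff] at hz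
    exact hz ▸ ha
  · exact h a ha b hb hab z ((mem_star_iff hab).1 hz)

variable (PG) in
def join (E F : Set G) : Set G :=
  E ∪ F ∪ {z | ∃ e ∈ E, ∃ f ∈ F, e ≠ f ∧ PG.l z e f}

lemma join_comm (E F : Set G) : PG.join E F = PG.join F E := by
  ext x
  constructor <;>
  · rintro ((h | h) | ⟨e, he, f, hf, hef, hl⟩)
    · exact Or.inl (Or.inr h)
    · exact Or.inl (Or.inl h)
    · exact Or.inr ⟨f, hf, e, he, hef.symm, l_swap hl⟩

lemma star_subset_join {E F : Set G} {e f : G} (he : e ∈ E) (hf : f ∈ F) :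
    PG.star e f ⊆ PG.join E F := by
  obtain rfl | hef := eq_or_ne e f
  · rw [star_self, Set.singleton_subset_iff]
    exact Or.inl (Or.inl he)
  · exact fun z hz => Or.inr ⟨e, he, f, hf, hef, (mem_star_iff hef).1 hz⟩

lemma star_subset_join_left {E F : Set G} (hE : PG.IsSubspace E) {e u : G}
    (he : e ∈ E) (hu : u ∈ PG.join E F) : PG.star e u ⊆ PG.join E F := by
  intro z hz
  obtain rfl | heu := eq_or_ne e u
  · rw [star_self, Set.mem_singleton_iff] at hz
    exact hz ▸ Or.inl (Or.inl he)
  have hl : PG.l z e u := (mem_star_iff heu).1 hz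
  rcases hu with (huE | huF) | ⟨e', he', f', hf', he'f', hu⟩
  · exact Or.inl (Or.inl (hE e he u huE hz))
  · exact star_subset_join he huF hz
  obtain rfl | he'e := eq_or_ne e' e
  · rw [← star_eq he'f' heu (l_swap (PG.g1 e' f')) hu] at hz
    exact star_subset_join he hf' hz
  obtain ⟨q, hqe, hqz⟩ := PG.g3 e' f' e z u hu (l_swap (l_rot hl))
  have hqE : q ∈ E := isSubspace_iff.1 hE e' he' e he he'e q hqe
  obtain rfl | hqf' := eq_or_ne q f'
  · have huE : u ∈ E := isSubspace_iff.1 hE e' he' q hqE he'f' u hu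
    exact Or.inl (Or.inl (hE e he u huE hz))
  · exact star_subset_join hqE hf' ((mem_star_iff hqf').2 (l_rot hqz))

lemma star_subset_join_right {E F : Set G} (hF : PG.IsSubspace F) {f u : G}
    (hf : f ∈ F) (hu : u ∈ PG.join E F) : PG.star f u ⊆ PG.join E F := by
  rw [join_comm] at hu ⊢
  exact star_subset_join_left hF hf hu

lemma join_isSubspace {E F : Set G} (hE : PG.IsSubspace E) (hF : PG.IsSubspace F) :
    PG.IsSubspace (PG.join E F) := by
  refine isSubspace_iff.2 fun x hx y hy hxy z hz => ?_
  rcases hx with (hxE | hxF) | ⟨e, he, f, hf, hef, hx⟩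
  · exact star_subset_join_left hE hxE hy ((mem_star_iff hxy).2 hz)
  · exact star_subset_join_right hF hxF hy ((mem_star_iff hxy).2 hz)
  by_cases hyef : y ∈ PG.star e f
  · have hline := star_eq hef hxy hx ((mem_star_iff hef).1 hyef)
    exact star_subset_join he hf (hline ▸ (mem_star_iff hxy).2 hz)
  have hey : e ≠ y := fun h => hyef (h ▸ left_mem_star e f)
  -- Pasch's axiom (G3) on the lines `ef` and `yz` meeting at `x`.
  obtain ⟨q, hqe, hqf⟩ := PG.g3 e f y z x hx (l_rot (l_rot hz))
  have hqJ : q ∈ PG.join E F := star_subset_join_left hE he hy ((mem_star_iff hey).2 hqe)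
  obtain rfl | hqf' := eq_or_ne q f
  · exact absurd (star_eq hey hef (l_swap (PG.g1 e y)) hqe ▸ right_mem_star e y) hyef
  · exact star_subset_join_right hF hf hqJ ((mem_star_iff hqf'.symm).2 (l_swap (l_rot hqf)))

lemma subset_cl (A : Set G) : A ⊆ PG.cl A := fun _ hx _ hS => hS.2 hx

lemma cl_isSubspace (A : Set G) : PG.IsSubspace (PG.cl A) :=
  fun a ha b hb _ hz S hS => hS.1 a (ha S hS) b (hb S hS) hz

lemma cl_min {A S : Set G} (hS : PG.IsSubspace S) (h : A ⊆ S) : PG.cl A ⊆ S :=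
  Set.sInter_subset_of_mem ⟨hS, h⟩

lemma cl_self {S : Set G} (hS : PG.IsSubspace S) : PG.cl S = S :=
  (cl_min hS le_rfl).antisymm (subset_cl S)

lemma cl_union_subset_join {E F : Set G} (hE : PG.IsSubspace E) (hF : PG.IsSubspace F) :
    PG.cl (E ∪ F) ⊆ PG.join E F :=
  cl_min (join_isSubspace hE hF) Set.subset_union_left

lemma cl_union_singleton_subset {S : Set G} {a p : G} (h : a ∈ PG.cl ({p} ∪ S)) :
    PG.cl ({a} ∪ S) ⊆ PG.cl ({p} ∪ S) :=
  cl_min (cl_isSubspace _) <|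
    Set.union_subset (Set.singleton_subset_iff.2 h) fun _ hs => subset_cl _ (Or.inr hs)

lemma cl_union_singleton_eq_of_l {S : Set G} {a e p : G} (he : e ∈ S) (hae : a ≠ e)
    (hep : e ≠ p) (hl : PG.l a e p) : PG.cl ({a} ∪ S) = PG.cl ({p} ∪ S) := by
  have heS (b : G) : e ∈ PG.cl ({b} ∪ S) := subset_cl _ (Or.inr he)
  have hb (b : G) : b ∈ PG.cl ({b} ∪ S) := subset_cl _ (Or.inl rfl)
  exact (cl_union_singleton_subset
      (cl_isSubspace _ e (heS p) p (hb p) ((mem_star_iff hep).2 hl))).antisymm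
    (cl_union_singleton_subset
      (cl_isSubspace _ a (hb a) e (heS a) ((mem_star_iff hae).2 (l_rot hl))))

end ProjGeom

namespace HilbGeom

open ProjGeom

variable {G : Type u} (HG : HilbGeom G)

lemma perpSet_isSubspace (A : Set G) : HG.IsSubspace (HG.perpSet A) :=
  isSubspace_iff.2 fun a ha b hb hab z hz c hc => HG.o3 a b z c hab (ha c hc) (hb c hc) hz

lemma subset_perpSet_perpSet (A : Set G) : A ⊆ HG.perpSet (HG.perpSet A) :=
  fun x hx y hy => HG.o2 y x (hy x hx)

lemma perpSet_anti {A B : Set G} (h : A ⊆ B) : HG.perpSet B ⊆ HG.perpSet A :=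
  fun _ hx a ha => hx a (h ha)

lemma perpSet_cl (A : Set G) : HG.perpSet (HG.cl A) = HG.perpSet A :=
  (HG.perpSet_anti (subset_cl A)).antisymm <| (HG.subset_perpSet_perpSet _).trans <|
    HG.perpSet_anti (cl_min (HG.perpSet_isSubspace _) (HG.subset_perpSet_perpSet A))

variable {HG}

lemma mem_join_perpSet {S : Set G} (hS : HG.IsSubspace S)
    (hclosed : HG.perpSet (HG.perpSet S) = S) (x : G) : x ∈ HG.join S (HG.perpSet S) :=
  cl_union_subset_join hS (HG.perpSet_isSubspace S) ((HG.o5 S hS hclosed).symm ▸ Set.mem_univ x)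

lemma eq_of_mem_perpSet_of_mem_perpSet_perpSet {S : Set G} {p q : G} (hp : p ∈ HG.perpSet S)
    (hq : q ∈ HG.perpSet S) (hqT : q ∈ HG.perpSet (HG.perpSet (HG.cl ({p} ∪ S)))) :
    q = p := by
  by_contra hqp
  obtain ⟨z, hz, hzp⟩ := HG.o4 p q (Ne.symm hqp)
  have hzS : z ∈ HG.perpSet S := isSubspace_iff.1 (HG.perpSet_isSubspace S) p hp q hq
    (Ne.symm hqp) z hz
  have hzT : z ∈ HG.perpSet (HG.cl ({p} ∪ S)) := by
    rw [perpSet_cl]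
    rintro w (rfl | hw)
    exacts [hzp, hzS w hw]
  have hzTT : z ∈ HG.perpSet (HG.perpSet (HG.cl ({p} ∪ S))) :=
    isSubspace_iff.1 (HG.perpSet_isSubspace _) p
      (HG.subset_perpSet_perpSet _ (subset_cl _ (Or.inl rfl))) q hqT (Ne.symm hqp) z hz
  exact HG.o1 z z (hzTT z hzT) rfl

lemma perpSet_perpSet_cl_union_singleton_of_mem_perpSet {S : Set G} (hS : HG.IsSubspace S)
    (hclosed : HG.perpSet (HG.perpSet S) = S) {p : G} (hp : p ∈ HG.perpSet S) :
    HG.perpSet (HG.perpSet (HG.cl ({p} ∪ S))) = HG.cl ({p} ∪ S) := by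
  set T := HG.cl ({p} ∪ S)
  have hpT : p ∈ T := subset_cl _ (Or.inl rfl)
  have hST : S ⊆ T := fun s hs => subset_cl _ (Or.inr hs)
  have hTT : T ⊆ HG.perpSet (HG.perpSet T) := HG.subset_perpSet_perpSet T
  refine Set.Subset.antisymm (fun x hx => ?_) hTT
  rcases mem_join_perpSet hS hclosed x with (hxS | hxS) | ⟨e, he, q, hq, heq, hl⟩
  · exact hST hxS
  · exact eq_of_mem_perpSet_of_mem_perpSet_perpSet hp hxS hx ▸ hpT
  obtain rfl | hxe := eq_or_ne x e
  · exact hST he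
  have hqTT : q ∈ HG.perpSet (HG.perpSet T) :=
    isSubspace_iff.1 (HG.perpSet_isSubspace _) e (hTT (hST he)) x hx hxe.symm q
      (l_swap (l_rot hl))
  obtain rfl := eq_of_mem_perpSet_of_mem_perpSet_perpSet hp hq hqTT
  exact isSubspace_iff.1 (cl_isSubspace _) e (hST he) q hpT heq x hl

lemma mem_or_exists_perp_cl_union_singleton_eq {S : Set G} (hS : HG.IsSubspace S)
    (hclosed : HG.perpSet (HG.perpSet S) = S) (a : G) :
    a ∈ S ∨ ∃ p ∈ HG.perpSet S, HG.cl ({a} ∪ S) = HG.cl ({p} ∪ S) := by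
  rcases mem_join_perpSet hS hclosed a with (haS | haS) | ⟨e, he, p, hp, hep, hl⟩
  · exact Or.inl haS
  · exact Or.inr ⟨a, haS, rfl⟩
  obtain rfl | hae := eq_or_ne a e
  · exact Or.inl he
  · exact Or.inr ⟨p, hp, cl_union_singleton_eq_of_l he hae hep hl⟩

end HilbGeom

/-- In a Hilbert geometry, if `S` is a (biorthogonally) closed subspace and `a` a point,
then the subspace `cl ({a} ∪ S)` is closed. -/
theorem closed_join_atom {G : Type u} (HG : HilbGeom G) (S : Set G)
    (hS : HG.toProjGeom.IsSubspace S)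
    (hclosed : HG.perpSet (HG.perpSet S) = S) (a : G) :
    HG.perpSet (HG.perpSet (HG.toProjGeom.cl ({a} ∪ S))) =
      HG.toProjGeom.cl ({a} ∪ S) := by
  rcases HG.mem_or_exists_perp_cl_union_singleton_eq hS hclosed a with haS | ⟨p, hp, hcl⟩
  · rw [Set.union_eq_self_of_subset_left (Set.singleton_subset_iff.2 haS), ProjGeom.cl_self hS]
    exact hclosed
  · rw [hcl]
    exact HG.perpSet_perpSet_cl_union_singleton_of_mem_perpSet hS hclosed hp
end

section
/- Let L be a Hilbert lattice with orthogonality operator x ↦ x^⊥. Then: (1) every atom of L is closed; (2) x^⊥ is closed for every x ∈ L; and (3) the closed elements satisfy the orthomodular law: if x and y are closed elements with x ≤ y, then x ⊔ (x^⊥ ⊓ y) = y. -/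
/-- In a Hilbert lattice (a projective lattice with an orthogonality operator satisfying
(H1)-(H5)): every atom is closed, every orthocomplement is closed, and the closed
elements satisfy the orthomodular law. -/
theorem hilbert_lattice_facts {L : Type*} [CompleteLattice L]
    (hatomistic : ∀ x : L, x = sSup {a : L | IsAtom a ∧ a ≤ x})
    (hcompact : ∀ a : L, IsAtom a → ∀ D : Set L, D.Nonempty → DirectedOn (· ≤ ·) D →
      a ≤ sSup D → ∃ d ∈ D, a ≤ d)
    (hmod : ∀ x y z : L, x ≤ z → x ⊔ (y ⊓ z) = (x ⊔ y) ⊓ z)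
    (perp : L → L)
    (h1 : ∀ x : L, x ≤ perp (perp x))
    (h2 : ∀ x y : L, x ≤ y → perp y ≤ perp x)
    (h3 : ∀ x : L, x ⊓ perp x = ⊥)
    (h4 : ∀ x a : L, x = perp (perp x) → IsAtom a → a ⊔ x = perp (perp (a ⊔ x)))
    (h5 : ∀ x : L, x = perp (perp x) → x ⊔ perp x = ⊤) :
    (∀ a : L, IsAtom a → a = perp (perp a)) ∧
    (∀ x : L, perp x = perp (perp (perp x))) ∧
    (∀ x y : L, x = perp (perp x) → y = perp (perp y) → x ≤ y →
      x ⊔ (perp x ⊓ y) = y) := by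
  -- ⊥ is closed
  have hbot : (⊥ : L) = perp (perp ⊥) := by
    have hle : perp (perp (⊥ : L)) ≤ perp ⊥ := h2 _ _ bot_le
    have h := h3 (perp (⊥ : L))
    exact (le_antisymm ((le_inf hle le_rfl).trans h.le) bot_le).symm
  refine ⟨?_, ?_, ?_⟩
  · intro a ha
    have := h4 ⊥ a hbot ha
    simpa using this
  · intro x
    exact le_antisymm (h1 (perp x)) (h2 _ _ (h1 x))
  · intro x y hx hy hxy
    rw [hmod x (perp x) y hxy, h5 x hx, top_inf_eq]
end

section
/- Uniqueness of the Hermitian form: Let H be a vector space of dimension at least 3 over a division ring K, let α ↦ α* and α ↦ α^# be two involutive anti-automorphisms of K, let ⟨·,·⟩ be an anisotropic *-Hermitian form on H and [·,·] an anisotropic #-Hermitian form on H. If both forms induce the same orthogonality — for all nonzero x, y ∈ H, ⟨x,y⟩ = 0 if and only if [x,y] = 0 — then there exists λ ∈ K with λ ≠ 0 and λ* = λ such that ρ^# = λ⁻¹ ρ* λ for all ρ ∈ K and [x,y] = ⟨x,y⟩ λ for all x, y ∈ H. -/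
/-- **Uniqueness of the Hermitian form.** Two anisotropic Hermitian forms (with respect to
possibly different involutive anti-automorphisms) on a vector space of dimension at least
3 over a division ring which induce the same orthogonality are proportional: there is a
nonzero `lam` with `lam* = lam` such that `ρ^# = lam⁻¹ ρ* lam` and `[x,y] = ⟨x,y⟩ lam`. -/
theorem hermitian_form_unique {K H : Type*} [DivisionRing K] [AddCommGroup H]
    [Module K H] (hdim : 3 ≤ Module.rank K H)
    (star sharp : K → K)
    (hstar_add : ∀ a b : K, star (a + b) = star a + star b)
    (hstar_mul : ∀ a b : K, star (a * b) = star b * star a)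
    (hstar_invol : ∀ a : K, star (star a) = a)
    (hsharp_add : ∀ a b : K, sharp (a + b) = sharp a + sharp b)
    (hsharp_mul : ∀ a b : K, sharp (a * b) = sharp b * sharp a)
    (hsharp_invol : ∀ a : K, sharp (sharp a) = a)
    (f g : H → H → K)
    (hf_addl : ∀ x y z : H, f (x + y) z = f x z + f y z)
    (hf_addr : ∀ x y z : H, f x (y + z) = f x y + f x z)
    (hf_smul : ∀ (c : K) (x y : H), f (c • x) y = c * f x y)
    (hf_herm : ∀ x y : H, f y x = star (f x y))
    (hf_aniso : ∀ x : H, x ≠ 0 → f x x ≠ 0)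
    (hg_addl : ∀ x y z : H, g (x + y) z = g x z + g y z)
    (hg_addr : ∀ x y z : H, g x (y + z) = g x y + g x z)
    (hg_smul : ∀ (c : K) (x y : H), g (c • x) y = c * g x y)
    (hg_herm : ∀ x y : H, g y x = sharp (g x y))
    (hg_aniso : ∀ x : H, x ≠ 0 → g x x ≠ 0)
    (hsame : ∀ x y : H, x ≠ 0 → y ≠ 0 → (f x y = 0 ↔ g x y = 0)) :
    ∃ lam : K, lam ≠ 0 ∧ star lam = lam ∧
      (∀ ρ : K, sharp ρ = lam⁻¹ * star ρ * lam) ∧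
      (∀ x y : H, g x y = f x y * lam) := by
  -- basic facts about star and sharp
  have hstar0 : star 0 = 0 := by
    have h := hstar_add 0 0
    simp only [add_zero] at h
    exact (left_eq_add.mp h)
  have hsharp0 : sharp 0 = 0 := by
    have h := hsharp_add 0 0
    simp only [add_zero] at h
    exact (left_eq_add.mp h)
  have hstar_ne : ∀ a : K, a ≠ 0 → star a ≠ 0 := by
    intro a ha h
    exact ha (by rw [← hstar_invol a, h, hstar0])
  have hstar1 : star 1 = 1 := by
    have h := hstar_mul 1 1
    rw [mul_one] at h
    have h1 : star 1 ≠ 0 := hstar_ne 1 one_ne_zero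
    have h2 : star 1 * 1 = star 1 * star 1 := by rw [mul_one]; exact h
    exact (mul_left_cancel₀ h1 h2).symm
  have hsharp_ne : ∀ a : K, a ≠ 0 → sharp a ≠ 0 := by
    intro a ha h
    exact ha (by rw [← hsharp_invol a, h, hsharp0])
  have hsharp1 : sharp 1 = 1 := by
    have h := hsharp_mul 1 1
    rw [mul_one] at h
    have h1 : sharp 1 ≠ 0 := hsharp_ne 1 one_ne_zero
    have h2 : sharp 1 * 1 = sharp 1 * sharp 1 := by rw [mul_one]; exact h
    exact (mul_left_cancel₀ h1 h2).symm
  have hstar_inv : ∀ a : K, a ≠ 0 → star a⁻¹ = (star a)⁻¹ := by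
    intro a ha
    have h : star a⁻¹ * star a = 1 := by
      rw [← hstar_mul, mul_inv_cancel₀ ha, hstar1]
    exact eq_inv_of_mul_eq_one_left h
  have hstar_neg : ∀ a : K, star (-a) = - star a := by
    intro a
    have h := hstar_add a (-a)
    rw [add_neg_cancel, hstar0] at h
    exact eq_neg_of_add_eq_zero_right h.symm
  have hstar_sub : ∀ a b : K, star (a - b) = star a - star b := by
    intro a b
    rw [sub_eq_add_neg, hstar_add, hstar_neg, sub_eq_add_neg]
  -- basic facts about the forms
  have hf0l : ∀ y : H, f 0 y = 0 := by
    intro y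
    have h := hf_smul 0 0 y
    rwa [zero_smul, zero_mul] at h
  have hf0r : ∀ x : H, f x 0 = 0 := by
    intro x
    rw [hf_herm 0 x, hf0l, hstar0]
  have hg0l : ∀ y : H, g 0 y = 0 := by
    intro y
    have h := hg_smul 0 0 y
    rwa [zero_smul, zero_mul] at h
  have hg0r : ∀ x : H, g x 0 = 0 := by
    intro x
    rw [hg_herm 0 x, hg0l, hsharp0]
  have hf_subl : ∀ x y z : H, f (x - y) z = f x z - f y z := by
    intro x y z
    have h : f (-y) z = - f y z := by
      rw [← neg_one_smul K y, hf_smul, neg_one_mul]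
    rw [sub_eq_add_neg, hf_addl, h, sub_eq_add_neg]
  have hg_subl : ∀ x y z : H, g (x - y) z = g x z - g y z := by
    intro x y z
    have h : g (-y) z = - g y z := by
      rw [← neg_one_smul K y, hg_smul, neg_one_mul]
    rw [sub_eq_add_neg, hg_addl, h, sub_eq_add_neg]
  have hf_subr : ∀ x y z : H, f x (y - z) = f x y - f x z := by
    intro x y z
    rw [hf_herm (y - z) x, hf_subl, hstar_sub, ← hf_herm y x, ← hf_herm z x]
  have hf_diag : ∀ x : H, star (f x x) = f x x := (fun x => (hf_herm x x).symm)
  -- Step 1 : the proportionality factor, pointwise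
  have step1 : ∀ x y : H, y ≠ 0 → g x y = f x y * ((f y y)⁻¹ * g y y) := by
    intro x y hy
    have hfyy : f y y ≠ 0 := hf_aniso y hy
    have horth : f (x - (f x y * (f y y)⁻¹) • y) y = 0 := by
      rw [hf_subl, hf_smul, mul_assoc, inv_mul_cancel₀ hfyy, mul_one, sub_self]
    by_cases hx' : x - (f x y * (f y y)⁻¹) • y = 0
    · have hx : x = (f x y * (f y y)⁻¹) • y := by
        rwa [sub_eq_zero] at hx'
      conv_lhs => rw [hx, hg_smul]
      rw [mul_assoc]
    · have hg0 : g (x - (f x y * (f y y)⁻¹) • y) y = 0 := (hsame _ y hx' hy).mp horth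
      rw [hg_subl, hg_smul, sub_eq_zero] at hg0
      rw [hg0, mul_assoc]
  -- Step 2 : the factor is the same on independent vectors
  have step2 : ∀ x y : H, x ≠ 0 → (∀ d : K, y ≠ d • x) →
      (f x x)⁻¹ * g x x = (f y y)⁻¹ * g y y := by
    intro x y hx hind
    have hy : y ≠ 0 := fun h => hind 0 (by rw [h, zero_smul])
    have hxy0 : x + y ≠ 0 := by
      intro h
      exact hind (-1) (by rw [neg_one_smul, eq_neg_iff_add_eq_zero, add_comm]; exact h)
    set lx : K := (f x x)⁻¹ * g x x with hlx
    set ly : K := (f y y)⁻¹ * g y y with hly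
    set L : K := (f (x+y) (x+y))⁻¹ * g (x+y) (x+y) with hL
    have hfxx : f x x ≠ 0 := hf_aniso x hx
    have hfyy : f y y ≠ 0 := hf_aniso y hy
    have hgxx : g x x = f x x * lx := by
      rw [hlx, ← mul_assoc, mul_inv_cancel₀ hfxx, one_mul]
    have hgyy : g y y = f y y * ly := by
      rw [hly, ← mul_assoc, mul_inv_cancel₀ hfyy, one_mul]
    -- equation A
    have eqA : f x x * lx + f x y * ly = f x x * L + f x y * L := by
      have h1 : g x (x + y) = g x x + g x y := hg_addr x x y
      rw [step1 x (x+y) hxy0, step1 x y hy, hgxx, hf_addr, ← hL, ← hly, add_mul] at h1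
      exact h1.symm
    have eqA' : f x x * (lx - L) = f x y * (L - ly) := by
      rw [mul_sub, mul_sub]
      exact sub_eq_sub_iff_add_eq_add.mpr (eqA.trans (add_comm _ _))
    have eqB' : f y x * (lx - L) = f y y * (L - ly) := by
      have h1 : g y (x + y) = g y x + g y y := hg_addr y x y
      rw [step1 y (x+y) hxy0, step1 y x hx, hgyy, hf_addr, ← hL, ← hlx, add_mul] at h1
      rw [mul_sub, mul_sub]
      exact sub_eq_sub_iff_add_eq_add.mpr (h1.symm.trans (add_comm _ _))
    -- first show L = ly
    have hLly : L = ly := by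
      by_contra hne
      have hD : L - ly ≠ 0 := sub_ne_zero.mpr hne
      have hsub : lx - L = (f x x)⁻¹ * (f x y * (L - ly)) := by
        rw [← eqA', ← mul_assoc, inv_mul_cancel₀ hfxx, one_mul]
      have h2 : f y x * ((f x x)⁻¹ * (f x y * (L - ly))) = f y y * (L - ly) := by
        rw [← hsub]; exact eqB'
      rw [← mul_assoc (f x x)⁻¹ (f x y) (L - ly), ← mul_assoc] at h2
      have hkey : f y x * ((f x x)⁻¹ * f x y) = f y y := mul_right_cancel₀ hD h2
      -- derive that y is a multiple of x, contradiction
      set d : K := f y x * (f x x)⁻¹ with hd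
      have hstard : star d = (f x x)⁻¹ * f x y := by
        rw [hd, hstar_mul, hstar_inv _ hfxx, hf_diag, ← hf_herm y x]
      have hdxy : f (d • x) y = f y y := by
        rw [hf_smul, hd, mul_assoc]
        exact hkey
      have hydx : f y (d • x) = f y y := by
        rw [hf_herm (d • x) y, hdxy, hf_diag]
      have hx_dx : f x (d • x) = f x y := by
        rw [hf_herm (d • x) x, hf_smul, hstar_mul, hf_diag, hstard, ← mul_assoc,
          mul_inv_cancel₀ hfxx, one_mul]
      have hdxdx : f (d • x) (d • x) = f y y := by
        rw [hf_smul, hx_dx, hd, mul_assoc]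
        exact hkey
      have hzero : f (y - d • x) (y - d • x) = 0 := by
        rw [hf_subl, hf_subr, hf_subr, hydx, hdxy, hdxdx]
        simp
      have hy' : y - d • x = 0 := by
        by_contra h
        exact hf_aniso _ h hzero
      exact hind d (by rwa [sub_eq_zero] at hy')
    -- then conclude lx = L
    have hlxL : lx = L := by
      have h : f x x * (lx - L) = 0 := by
        rw [eqA', hLly, sub_self, mul_zero]
      have := (mul_eq_zero.mp h).resolve_left hfxx
      rwa [sub_eq_zero] at this
    rw [hlxL, hLly]
  -- a vector independent from any given vector
  have exists_indep : ∀ x : H, ∃ z : H, ∀ d : K, z ≠ d • x := by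
    intro x
    by_contra h
    push_neg at h
    have hle : Module.rank K H ≤ 1 := by
      rw [rank_le_one_iff]
      exact ⟨x, fun v => by obtain ⟨d, hd⟩ := h v; exact ⟨d, hd.symm⟩⟩
    have h3 : (3 : Cardinal) ≤ 1 := le_trans hdim hle
    norm_num at h3
  obtain ⟨e, he'⟩ := exists_indep 0
  have he : e ≠ 0 := fun h => he' 0 (by rw [h, zero_smul])
  -- the factor is globally constant
  have hconst : ∀ x : H, x ≠ 0 → (f x x)⁻¹ * g x x = (f e e)⁻¹ * g e e := by
    intro x hx
    by_cases hdep : ∃ d : K, e = d • x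
    · obtain ⟨d, hd⟩ := hdep
      obtain ⟨z, hz⟩ := exists_indep x
      have h1 : (f x x)⁻¹ * g x x = (f z z)⁻¹ * g z z := step2 x z hx hz
      have hz' : ∀ c : K, z ≠ c • e := by
        intro c hc
        exact hz (c * d) (by rw [hc, hd, smul_smul])
      have h2 : (f e e)⁻¹ * g e e = (f z z)⁻¹ * g z z := step2 e z he hz'
      rw [h1, h2]
    · push_neg at hdep
      exact step2 x e hx hdep
  set lam : K := (f e e)⁻¹ * g e e with hlam
  have hfee : f e e ≠ 0 := hf_aniso e he
  have hlam_ne : lam ≠ 0 := mul_ne_zero (inv_ne_zero hfee) (hg_aniso e he)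
  -- the main proportionality formula
  have hmain : ∀ x y : H, g x y = f x y * lam := by
    intro x y
    by_cases hy : y = 0
    · rw [hy, hg0r, hf0r, zero_mul]
    · rw [step1 x y hy, hconst y hy]
  -- the key scalar identity
  have hxykey : ∀ x y : H, star (f x y) * lam = sharp lam * sharp (f x y) := by
    intro x y
    have h1 : g y x = sharp (g x y) := hg_herm x y
    rw [hmain y x, hmain x y, hf_herm x y, hsharp_mul] at h1
    exact h1
  have hsurj : ∀ μ : K, ∃ y : H, f e y = μ := by
    intro μ
    refine ⟨(star ((f e e)⁻¹ * μ)) • e, ?_⟩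
    rw [hf_herm _ e, hf_smul, hstar_mul, hstar_invol, hf_diag, ← mul_assoc,
      mul_inv_cancel₀ hfee, one_mul]
  have key : ∀ μ : K, star μ * lam = sharp lam * sharp μ := by
    intro μ
    obtain ⟨y, hy⟩ := hsurj μ
    rw [← hy]
    exact hxykey e y
  have hsharp_lam : sharp lam = lam := by
    have h := key 1
    rw [hstar1, hsharp1, one_mul, mul_one] at h
    exact h.symm
  have hstar_lam : star lam = lam := by
    have h := key lam
    rw [hsharp_lam] at h
    exact mul_right_cancel₀ hlam_ne h
  refine ⟨lam, hlam_ne, hstar_lam, ?_, hmain⟩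
  intro ρ
  have h := key ρ
  rw [hsharp_lam] at h
  rw [mul_assoc, h, inv_mul_cancel_left₀ hlam_ne]
end
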